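/- arXiv:2405.13975 — 2 statements merged into one kernel-verified Lean document; each statement's English description precedes it below -/
import Mathlib

section
/- Let a₁,…,aₙ ∈ ℂ with Re(a_j) < 0 and c₁,…,cₙ ∈ ℂ, defining G(s) = Σ_j c_j/(s − a_j). Let ã_j, c̃_j be perturbed values with Re(ã_j) < 0, |a_j − ã_j| ≤ Δ_A ≤ min_j |Re(a_j)|/2, and |c_j − c̃_j| ≤ Δ_B, defining G̃(s) = Σ_j c̃_j/(s − ã_j). Then sup_{Re(s)=0} |G(s) − G̃(s)| ≤ 4n·Δ_A·max_j |c_j|/|Re(a_j)|² + n·Δ_B·max_j 1/|Re(a_j)|. -/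
/-
Write `c/(s - a) - c'/(s - a')` as `(c - c')/(s - a) + c' (a - a')/((s - a)(s - a'))`. On the
imaginary axis `‖s - a‖ ≥ |Re a|`, and since `|a - a'| ≤ |Re a|/2` also `‖s - a'‖ ≥ |Re a|/2`;
together with `‖c'‖ ≤ 2‖c‖` each summand of `G - G̃` is at most
`4 ΔA ‖c‖/|Re a|² + ΔB/|Re a|`, and the triangle inequality over the `n` summands finishes.
-/

section NormedField

variable {𝕜 : Type*} [NormedField 𝕜]

theorem norm_div_sub_div_le {x y c c' : 𝕜} (hx : x ≠ 0) (hy : y ≠ 0) :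
    ‖c / x - c' / y‖ ≤ ‖c - c'‖ / ‖x‖ + ‖c'‖ * ‖x - y‖ / (‖x‖ * ‖y‖) := by
  have hsplit : c / x - c' / y = (c - c') / x + c' * (y - x) / (x * y) := by
    field_simp
    ring
  rw [hsplit]
  refine (norm_add_le _ _).trans_eq ?_
  rw [norm_div, norm_div, norm_mul, norm_mul, norm_sub_rev y x]

theorem norm_div_sub_div_le_of_perturbation {s a a' c c' : 𝕜} {r ΔA ΔB : ℝ} (hr : 0 < r)
    (hsa : r ≤ ‖s - a‖) (hΔA : ‖a - a'‖ ≤ ΔA) (hΔAsmall : ΔA ≤ r / 2)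
    (hΔB : ‖c - c'‖ ≤ ΔB) (hΔBc : ‖c - c'‖ ≤ ‖c‖) :
    ‖c / (s - a) - c' / (s - a')‖ ≤ 4 * ΔA * (‖c‖ / r ^ 2) + ΔB * (1 / r) := by
  have hxy : ‖(s - a) - (s - a')‖ ≤ ΔA := by
    rwa [sub_sub_sub_cancel_left, norm_sub_rev]
  have hsa' : r / 2 ≤ ‖s - a'‖ := by
    linarith [norm_sub_norm_le (s - a) (s - a')]
  have hc' : ‖c'‖ ≤ 2 * ‖c‖ := by
    linarith [norm_le_norm_add_norm_sub' c' c, norm_sub_rev c c']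
  have hx : 0 < ‖s - a‖ := hr.trans_le hsa
  have hy : 0 < ‖s - a'‖ := (half_pos hr).trans_le hsa'
  have hΔA₀ : 0 ≤ ΔA := (norm_nonneg _).trans hΔA
  calc ‖c / (s - a) - c' / (s - a')‖
      ≤ ‖c - c'‖ / ‖s - a‖ + ‖c'‖ * ‖(s - a) - (s - a')‖ / (‖s - a‖ * ‖s - a'‖) :=
        norm_div_sub_div_le (norm_pos_iff.mp hx) (norm_pos_iff.mp hy)
    _ ≤ ΔB / r + 2 * ‖c‖ * ΔA / (r * (r / 2)) := by
        gcongr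
        exact (norm_nonneg _).trans hΔB
    _ = 4 * ΔA * (‖c‖ / r ^ 2) + ΔB * (1 / r) := by
        field_simp
        ring

end NormedField

theorem Complex.abs_re_le_norm_sub_of_re_eq_zero {s : ℂ} (hs : s.re = 0) (z : ℂ) :
    |z.re| ≤ ‖s - z‖ := by
  simpa [hs] using Complex.abs_re_le_norm (s - z)

theorem diagonal_lti_perturbation_general (n : ℕ) (hn : 0 < n)
    (a c atil ctil : Fin n → ℂ) (ΔA ΔB : ℝ)
    (ha : ∀ j, (a j).re < 0)
    (hΔA : ∀ j, ‖a j - atil j‖ ≤ ΔA)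
    (hΔAsmall : ∀ j, ΔA ≤ |(a j).re| / 2)
    (hΔB : ∀ j, ‖c j - ctil j‖ ≤ ΔB)
    (hΔBc : ∀ j, ‖c j - ctil j‖ ≤ ‖c j‖) :
    ∀ s : ℂ, s.re = 0 →
      ‖(∑ j, c j / (s - a j)) - (∑ j, ctil j / (s - atil j))‖ ≤
        4 * n * ΔA *
            (Finset.univ.sup' (Finset.univ_nonempty_iff.mpr (Fin.pos_iff_nonempty.mp hn))
              fun j => ‖c j‖ / |(a j).re| ^ 2) +
          n * ΔB *
            (Finset.univ.sup' (Finset.univ_nonempty_iff.mpr (Fin.pos_iff_nonempty.mp hn))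
              fun j => 1 / |(a j).re|) := by
  intro s hs
  set hne := Finset.univ_nonempty_iff.mpr (Fin.pos_iff_nonempty.mp hn)
  set M₁ := Finset.univ.sup' hne fun j => ‖c j‖ / |(a j).re| ^ 2
  set M₂ := Finset.univ.sup' hne fun j => 1 / |(a j).re|
  have hΔA₀ : 0 ≤ ΔA := (norm_nonneg _).trans (hΔA ⟨0, hn⟩)
  have hΔB₀ : 0 ≤ ΔB := (norm_nonneg _).trans (hΔB ⟨0, hn⟩)
  have hterm : ∀ j, ‖c j / (s - a j) - ctil j / (s - atil j)‖ ≤ 4 * ΔA * M₁ + ΔB * M₂ := by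
    intro j
    refine (norm_div_sub_div_le_of_perturbation (abs_pos.mpr (ha j).ne)
      (Complex.abs_re_le_norm_sub_of_re_eq_zero hs _) (hΔA j) (hΔAsmall j) (hΔB j)
      (hΔBc j)).trans ?_
    gcongr
    · exact Finset.le_sup' (fun j => ‖c j‖ / |(a j).re| ^ 2) (Finset.mem_univ j)
    · exact Finset.le_sup' (fun j => 1 / |(a j).re|) (Finset.mem_univ j)
  calc ‖(∑ j, c j / (s - a j)) - (∑ j, ctil j / (s - atil j))‖
      = ‖∑ j, (c j / (s - a j) - ctil j / (s - atil j))‖ := by rw [Finset.sum_sub_distrib]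
    _ ≤ ∑ _j : Fin n, (4 * ΔA * M₁ + ΔB * M₂) := norm_sum_le_of_le _ fun j _ => hterm j
    _ = 4 * n * ΔA * M₁ + n * ΔB * M₂ := by
        rw [Finset.sum_const, Finset.card_univ, Fintype.card_fin, nsmul_eq_mul]
        ring

/-- Perturbation bound for diagonal LTI transfer functions
`G s = ∑ c j / (s - a j)`. -/
theorem diagonal_lti_perturbation (n : ℕ) (hn : 0 < n)
    (a c atil ctil : Fin n → ℂ) (ΔA ΔB : ℝ)
    (ha : ∀ j, (a j).re < 0) (hatil : ∀ j, (atil j).re < 0)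
    (hΔA : ∀ j, ‖a j - atil j‖ ≤ ΔA)
    (hΔAsmall : ∀ j, ΔA ≤ |(a j).re| / 2)
    (hΔB : ∀ j, ‖c j - ctil j‖ ≤ ΔB)
    (hΔBc : ∀ j, ‖c j - ctil j‖ ≤ ‖c j‖) :
    ∀ s : ℂ, s.re = 0 →
      ‖(∑ j, c j / (s - a j)) - (∑ j, ctil j / (s - atil j))‖ ≤
        4 * n * ΔA *
            (Finset.univ.sup' (Finset.univ_nonempty_iff.mpr (Fin.pos_iff_nonempty.mp hn))
              fun j => ‖c j‖ / |(a j).re| ^ 2) +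
          n * ΔB *
            (Finset.univ.sup' (Finset.univ_nonempty_iff.mpr (Fin.pos_iff_nonempty.mp hn))
              fun j => 1 / |(a j).re|) :=
  diagonal_lti_perturbation_general n hn a c atil ctil ΔA ΔB ha hΔA hΔAsmall hΔB hΔBc
end

section
/- Let a₁,…,aₙ ∈ ℂ with Re(a_j) < 0, c₁,…,cₙ ∈ ℂ, and G(s) = Σ_j c_j/(s − a_j). For any Δ_A ≤ min_j |Re(a_j)|/2, perturbing the pole a_{j₂} to a_{j₂} + Δ_A (where j₂ maximizes |c_j|/|Re(a_j)|²) yields G̃_A with sup_{Re(s)=0} |G(s) − G̃_A(s)| ≥ Δ_A · max_j |c_j|/|Re(a_j)|². -/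
/-!
Only the `j₂`-th term of `G - G̃_A` survives. At `s = i · Im a_{j₂}` both of its poles lie on the horizontal
line through `s`, at distances `R = |Re a_{j₂}|` and `R - Δ_A`, so the difference is
`c_{j₂} Δ_A / (R (R - Δ_A))` in modulus, which is at least `Δ_A |c_{j₂}| / R²`.
-/

open Complex

theorem Finset.sum_sub_sum_ite_eq {ι α β : Type*} [Fintype ι] [DecidableEq ι] [AddCommGroup β]
    (F : ι → α → β) (a b : ι → α) (j₀ : ι) :
    (∑ j, F j (a j)) - ∑ j, F j (if j = j₀ then b j else a j) = F j₀ (a j₀) - F j₀ (b j₀) := by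
  rw [← Finset.sum_sub_distrib, Finset.sum_eq_single j₀]
  · simp
  · intro j _ hj
    simp [hj]
  · simp

theorem Complex.I_mul_im_sub_add_ofReal (a : ℂ) (t : ℝ) :
    I * a.im - (a + t) = ((-a.re - t : ℝ) : ℂ) := by
  apply Complex.ext <;> simp
  ring

theorem Complex.norm_div_ofReal_sub_div_ofReal (c : ℂ) {x y : ℝ} (hx : x ≠ 0) (hy : y ≠ 0) :
    ‖c / x - c / y‖ = ‖c‖ * |y - x| / (|x| * |y|) := by
  have hxy : c / x - c / y = c * ((y - x : ℝ) : ℂ) / ((x * y : ℝ) : ℂ) := by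
    have hx' : (x : ℂ) ≠ 0 := ofReal_ne_zero.mpr hx
    have hy' : (y : ℂ) ≠ 0 := ofReal_ne_zero.mpr hy
    push_cast
    field_simp
  rw [hxy, norm_div, norm_mul, Complex.norm_real, Complex.norm_real, Real.norm_eq_abs,
    Real.norm_eq_abs, abs_mul, mul_div_assoc]

theorem Complex.mul_norm_div_sq_le_norm_pole_shift (c a : ℂ) {Δ : ℝ} (hΔ₀ : 0 ≤ Δ)
    (hΔ : Δ < -a.re) :
    Δ * (‖c‖ / |a.re| ^ 2) ≤ ‖c / (I * a.im - a) - c / (I * a.im - (a + Δ))‖ := by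
  set R := -a.re with hR
  have hR₀ : 0 < R := by linarith
  have hRΔ : 0 < R - Δ := by linarith
  have hpole : I * a.im - a = (R : ℂ) := by
    simpa [hR] using Complex.I_mul_im_sub_add_ofReal a 0
  have hpole' : I * a.im - (a + Δ) = ((R - Δ : ℝ) : ℂ) := Complex.I_mul_im_sub_add_ofReal a Δ
  calc Δ * (‖c‖ / |a.re| ^ 2) = ‖c‖ * Δ / R ^ 2 := by
        rw [abs_of_neg (by linarith : a.re < 0)]
        ring
    _ ≤ ‖c‖ * Δ / (R * (R - Δ)) := by
        gcongr
        nlinarith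
    _ = ‖c‖ * |R - Δ - R| / (|R| * |R - Δ|) := by
        rw [abs_of_pos hR₀, abs_of_pos hRΔ, sub_sub_cancel_left, abs_neg, abs_of_nonneg hΔ₀]
    _ = ‖c / (I * a.im - a) - c / (I * a.im - (a + Δ))‖ := by
        rw [hpole, hpole', Complex.norm_div_ofReal_sub_div_ofReal c hR₀.ne' hRΔ.ne']

theorem diagonal_lti_pole_perturbation_sharp_general (n : ℕ) (a c : Fin n → ℂ)
    (ha : ∀ j, (a j).re < 0) (ΔA : ℝ) (hΔApos : 0 < ΔA)
    (hΔA : ∀ j, ΔA ≤ |(a j).re| / 2)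
    (j₂ : Fin n) :
    ∃ s : ℂ, s.re = 0 ∧
      ΔA * (‖c j₂‖ / |(a j₂).re| ^ 2) ≤
        ‖(∑ j, c j / (s - a j)) -
          (∑ j, c j / (s - (if j = j₂ then a j + (ΔA : ℂ) else a j)))‖ := by
  refine ⟨I * (a j₂).im, by simp, ?_⟩
  rw [Finset.sum_sub_sum_ite_eq (fun j z => c j / (I * (a j₂).im - z))]
  have hshift : ΔA < -(a j₂).re := by
    have := hΔA j₂
    rw [abs_of_neg (ha j₂)] at this
    linarith [ha j₂]
  exact Complex.mul_norm_div_sq_le_norm_pole_shift (c j₂) (a j₂) hΔApos.le hshift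

/-- Sharpness of the pole-perturbation bound: moving the pole `a j₂` (with `j₂`
maximizing `|c j| / |Re a_j|²`) by `ΔA` makes the sup over the imaginary axis
at least `ΔA * max_j |c j| / |Re a_j|²`. -/
theorem diagonal_lti_pole_perturbation_sharp (n : ℕ) (a c : Fin n → ℂ)
    (ha : ∀ j, (a j).re < 0) (ΔA : ℝ) (hΔApos : 0 < ΔA)
    (hΔA : ∀ j, ΔA ≤ |(a j).re| / 2)
    (j₂ : Fin n)
    (hj₂ : ∀ j, ‖c j‖ / |(a j).re| ^ 2 ≤
      ‖c j₂‖ / |(a j₂).re| ^ 2) :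
    ∃ s : ℂ, s.re = 0 ∧
      ΔA * (‖c j₂‖ / |(a j₂).re| ^ 2) ≤
        ‖(∑ j, c j / (s - a j)) -
          (∑ j, c j / (s - (if j = j₂ then a j + (ΔA : ℂ) else a j)))‖ :=
  diagonal_lti_pole_perturbation_sharp_general n a c ha ΔA hΔApos hΔA j₂
end
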